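/- arXiv:1811.04500 — 2 statements merged into one kernel-verified Lean document; each statement's English description precedes it below -/
import Mathlib

section
/- Let Y₁,…,Yₙ be i.i.d. square-integrable random variables and φ a symmetric function of n arguments with E[φ(Y₁,…,Yₙ)²] < ∞. Then Var[E[φ(Y₁,…,Yₙ) | Y₁]] ≤ Var[φ(Y₁,…,Yₙ)] / n. -/
/-!
Write `hᵢ(x) = E[φ(Y) | Yᵢ = x]`. Resampling `Yᵢ` shows that `hᵢ(Yᵢ)` is the orthogonal projection
of `φ(Y)` onto the functions of `Yᵢ`, so `Cov(φ(Y), hᵢ(Yᵢ)) = Var hᵢ(Yᵢ)`; the `hᵢ(Yᵢ)` are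
independent. Hence `0 ≤ Var(φ(Y) - ∑ hᵢ(Yᵢ)) = Var φ(Y) - ∑ Var hᵢ(Yᵢ)`, a Bessel inequality.
For symmetric `φ` and i.i.d. coordinates all `hᵢ` coincide, so `n · Var h₁(Y₁) ≤ Var φ(Y)`.
-/

open MeasureTheory ProbabilityTheory Function

theorem MeasureTheory.MeasurePreserving.integral_comp_of_aestronglyMeasurable
    {β γ E : Type*} [MeasurableSpace β] [MeasurableSpace γ] [NormedAddCommGroup E]
    [NormedSpace ℝ E] {μ : Measure β} {ν : Measure γ} {T : β → γ} (hT : MeasurePreserving T μ ν)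
    {g : γ → E} (hg : AEStronglyMeasurable g ν) :
    ∫ x, g (T x) ∂μ = ∫ y, g y ∂ν := by
  rw [← hT.map_eq] at hg ⊢
  exact (integral_map hT.aemeasurable hg).symm

theorem sq_integral_le_integral_sq {Ω : Type*} [MeasurableSpace Ω] {μ : Measure Ω}
    [IsProbabilityMeasure μ] {f : Ω → ℝ} (hf : MemLp f 2 μ) :
    (∫ x, f x ∂μ) ^ 2 ≤ ∫ x, f x ^ 2 ∂μ := by
  have hvar := variance_eq_sub hf ▸ variance_nonneg f μ
  simpa using hvar

section CoordCondExp

variable {ι : Type*} [Fintype ι] [DecidableEq ι] {α : ι → Type*} [∀ i, MeasurableSpace (α i)]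
  (μ : ∀ i, Measure (α i)) [∀ i, IsProbabilityMeasure (μ i)]

theorem measurePreserving_update_prod (i : ι) :
    MeasurePreserving (fun p : (∀ j, α j) × α i => update p.1 i p.2)
      ((Measure.pi μ).prod (μ i)) (Measure.pi μ) := by
  refine ⟨measurable_update', (Measure.pi_eq fun s hs => ?_).symm⟩
  have hpre : (fun p : (∀ j, α j) × α i => update p.1 i p.2) ⁻¹' Set.univ.pi s
      = Set.univ.pi (update s i Set.univ) ×ˢ s i := by
    ext p
    simp only [Set.mem_preimage, Set.mem_univ_pi, Set.mem_prod]
    grind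
  rw [Measure.map_apply measurable_update' (.univ_pi hs), hpre, Measure.prod_prod, Measure.pi_pi,
    ← Finset.prod_erase_mul _ _ (Finset.mem_univ i),
    ← Finset.prod_erase_mul _ _ (Finset.mem_univ i), update_self, measure_univ, mul_one]
  congr 1
  exact Finset.prod_congr rfl fun j hj => by rw [update_of_ne (Finset.ne_of_mem_erase hj)]

/-- The conditional expectation `E[φ(Y) | Yᵢ = x]` when `Y` has independent coordinates
`Yⱼ ∼ μ j`. -/
noncomputable def coordCondExp (φ : (∀ j, α j) → ℝ) (i : ι) (x : α i) : ℝ :=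
  ∫ z, φ (update z i x) ∂Measure.pi μ

variable {μ} {φ : (∀ j, α j) → ℝ}

theorem integral_mul_comp_eval_eq_integral_coordCondExp_mul {i : ι} {f : α i → ℝ}
    (hφf : Integrable (fun ω => φ ω * f (ω i)) (Measure.pi μ)) :
    ∫ ω, φ ω * f (ω i) ∂Measure.pi μ = ∫ x, coordCondExp μ φ i x * f x ∂μ i := by
  have hmp := measurePreserving_update_prod μ i
  have hprod : Integrable (fun p : (∀ j, α j) × α i => φ (update p.1 i p.2) * f p.2)
      ((Measure.pi μ).prod (μ i)) := by
    simpa [comp_def] using hmp.integrable_comp_of_integrable hφf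
  calc ∫ ω, φ ω * f (ω i) ∂Measure.pi μ
      = ∫ p, φ (update p.1 i p.2) * f p.2 ∂(Measure.pi μ).prod (μ i) := by
        simpa using (hmp.integral_comp_of_aestronglyMeasurable hφf.1).symm
    _ = ∫ x, ∫ z, φ (update z i x) * f x ∂Measure.pi μ ∂μ i := integral_prod_symm _ hprod
    _ = ∫ x, coordCondExp μ φ i x * f x ∂μ i := by simp only [integral_mul_const, coordCondExp]

theorem integral_coordCondExp (hφ : Integrable φ (Measure.pi μ)) (i : ι) :
    ∫ x, coordCondExp μ φ i x ∂μ i = ∫ ω, φ ω ∂Measure.pi μ := by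
  simpa using (integral_mul_comp_eval_eq_integral_coordCondExp_mul
    (f := fun _ => (1 : ℝ)) (by simpa using hφ)).symm

theorem aestronglyMeasurable_coordCondExp (hφ : AEStronglyMeasurable φ (Measure.pi μ)) (i : ι) :
    AEStronglyMeasurable (coordCondExp μ φ i) (μ i) :=
  (hφ.comp_measurePreserving (measurePreserving_update_prod μ i)).prod_swap.integral_prod_right'

theorem memLp_coordCondExp (hφ : MemLp φ 2 (Measure.pi μ)) (i : ι) :
    MemLp (coordCondExp μ φ i) 2 (μ i) := by
  have hmp := measurePreserving_update_prod μ i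
  have hsq : Integrable (fun p : (∀ j, α j) × α i => φ (update p.1 i p.2) ^ 2)
      ((Measure.pi μ).prod (μ i)) :=
    (hφ.comp_measurePreserving hmp).integrable_sq
  have hsections : ∀ᵐ x ∂μ i, MemLp (fun z => φ (update z i x)) 2 (Measure.pi μ) := by
    filter_upwards [((hφ.comp_measurePreserving hmp).integrable one_le_two).prod_left_ae,
      hsq.prod_left_ae] with x hx hx2
    exact (memLp_two_iff_integrable_sq hx.1).2 hx2
  refine (memLp_two_iff_integrable_sq (aestronglyMeasurable_coordCondExp hφ.1 i)).2 <|
    hsq.integral_prod_right.mono' ((aestronglyMeasurable_coordCondExp hφ.1 i).pow 2) ?_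
  filter_upwards [hsections] with x hx
  rw [Real.norm_eq_abs, abs_of_nonneg (sq_nonneg _)]
  exact sq_integral_le_integral_sq hx

theorem covariance_comp_eval_eq_covariance_coordCondExp (hφ : MemLp φ 2 (Measure.pi μ)) {i : ι}
    {f : α i → ℝ} (hf : MemLp f 2 (μ i)) :
    cov[φ, fun ω => f (ω i); Measure.pi μ] = cov[coordCondExp μ φ i, f; μ i] := by
  have hfi : MemLp (fun ω => f (ω i)) 2 (Measure.pi μ) :=
    hf.comp_measurePreserving (measurePreserving_eval μ i)
  rw [covariance_eq_sub hφ hfi, covariance_eq_sub (memLp_coordCondExp hφ i) hf]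
  simp only [Pi.mul_apply]
  rw [integral_mul_comp_eval_eq_integral_coordCondExp_mul (hφ.integrable_mul hfi),
    integral_coordCondExp (hφ.integrable one_le_two), integral_comp_eval hf.1]

theorem sum_variance_coordCondExp_le (hφ : MemLp φ 2 (Measure.pi μ)) :
    ∑ i, Var[coordCondExp μ φ i; μ i] ≤ Var[φ; Measure.pi μ] := by
  set Y := ∑ i, fun ω : ∀ j, α j => coordCondExp μ φ i (ω i)
  have hh := memLp_coordCondExp hφ
  have hcomp : ∀ i, MemLp (fun ω : ∀ j, α j => coordCondExp μ φ i (ω i)) 2 (Measure.pi μ) :=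
    fun i => (hh i).comp_measurePreserving (measurePreserving_eval μ i)
  have hvarY : Var[Y; Measure.pi μ] = ∑ i, Var[coordCondExp μ φ i; μ i] := variance_sum_pi hh
  have hcov : cov[φ, Y; Measure.pi μ] = ∑ i, Var[coordCondExp μ φ i; μ i] := by
    rw [covariance_sum_right hcomp hφ]
    refine Finset.sum_congr rfl fun i _ => ?_
    rw [covariance_comp_eval_eq_covariance_coordCondExp hφ (hh i),
      covariance_self (hh i).aemeasurable]
  have hnonneg := variance_nonneg (φ - Y) (Measure.pi μ)
  rw [variance_sub hφ (memLp_finsetSum' _ fun i _ => hcomp i), hcov, hvarY] at hnonneg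
  linarith

end CoordCondExp

theorem coordCondExp_eq_of_perm_invariant {ι β : Type*} [Fintype ι] [DecidableEq ι]
    [MeasurableSpace β] {ν : Measure β} [IsProbabilityMeasure ν] {φ : (ι → β) → ℝ}
    (hφ : ∀ (σ : Equiv.Perm ι) (y : ι → β), φ (y ∘ σ) = φ y) (i j : ι) :
    coordCondExp (fun _ => ν) φ i = coordCondExp (fun _ => ν) φ j := by
  funext x
  set σ := MeasurableEquiv.piCongrLeft (fun _ : ι => β) (Equiv.swap i j)
  have hσ : ∀ z, σ z = z ∘ Equiv.swap i j := fun z => by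
    ext k
    simp [σ, MeasurableEquiv.coe_piCongrLeft, Equiv.piCongrLeft_apply_eq_cast]
  have hupd : ∀ z : ι → β, update z i x = update (σ z) j x ∘ Equiv.swap i j := fun z => by
    rw [hσ, update_comp_equiv]
    congr
    · ext
      simp
    · simp
  calc coordCondExp (fun _ => ν) φ i x
      = ∫ z, φ (update (σ z) j x) ∂Measure.pi fun _ => ν := by
        simp only [coordCondExp, hupd, hφ]
    _ = coordCondExp (fun _ => ν) φ j x :=
        (measurePreserving_piCongrLeft (fun _ => ν) (Equiv.swap i j)).integral_comp'
          (fun z => φ (update z j x))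

theorem variance_hajek_projection_le_general
    {n : ℕ} (hn : 0 < n) (ν : Measure ℝ) [IsProbabilityMeasure ν]
    (φ : (Fin n → ℝ) → ℝ)
    (hL2 : MemLp φ 2 (Measure.pi fun _ : Fin n => ν))
    (hsym : ∀ (σ : Equiv.Perm (Fin n)) (y : Fin n → ℝ), φ (y ∘ σ) = φ y) :
    variance
        (fun ω : Fin n → ℝ =>
          ∫ z, φ (Function.update z ⟨0, hn⟩ (ω ⟨0, hn⟩))
            ∂(Measure.pi fun _ : Fin n => ν))
        (Measure.pi fun _ : Fin n => ν)
      ≤ variance φ (Measure.pi fun _ : Fin n => ν) / n := by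
  have hvar : Var[fun ω : Fin n → ℝ => coordCondExp (fun _ => ν) φ ⟨0, hn⟩ (ω ⟨0, hn⟩);
      Measure.pi fun _ => ν] = Var[coordCondExp (fun _ => ν) φ ⟨0, hn⟩; ν] :=
    (measurePreserving_eval _ _).variance_fun_comp
      (aestronglyMeasurable_coordCondExp hL2.1 _).aemeasurable
  have hsum : ∑ i, Var[coordCondExp (fun _ => ν) φ i; ν]
      = n * Var[coordCondExp (fun _ => ν) φ ⟨0, hn⟩; ν] := by
    simp [coordCondExp_eq_of_perm_invariant hsym _ ⟨0, hn⟩]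
  calc _ = Var[coordCondExp (fun _ => ν) φ ⟨0, hn⟩; ν] := hvar
    _ = (∑ i, Var[coordCondExp (fun _ => ν) φ i; ν]) / n := by
        rw [hsum, mul_div_cancel_left₀ _ (by exact_mod_cast hn.ne')]
    _ ≤ _ := by gcongr; exact sum_variance_coordCondExp_le hL2

/-- For i.i.d. square-integrable `Y₁,…,Yₙ` (modeled as coordinates of the product
measure `ν^{⊗n}`) and a symmetric square-integrable function `φ`, the variance of
the Hájek projection `E[φ(Y₁,…,Yₙ) | Y₁]` is at most `Var[φ(Y₁,…,Yₙ)] / n`. -/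
theorem variance_hajek_projection_le
    {n : ℕ} (hn : 0 < n) (ν : Measure ℝ) [IsProbabilityMeasure ν]
    (φ : (Fin n → ℝ) → ℝ) (hmeas : Measurable φ)
    (hL2 : MemLp φ 2 (Measure.pi fun _ : Fin n => ν))
    (hsym : ∀ (σ : Equiv.Perm (Fin n)) (y : Fin n → ℝ), φ (y ∘ σ) = φ y) :
    variance
        (fun ω : Fin n → ℝ =>
          ∫ z, φ (Function.update z ⟨0, hn⟩ (ω ⟨0, hn⟩))
            ∂(Measure.pi fun _ : Fin n => ν))
        (Measure.pi fun _ : Fin n => ν)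
      ≤ variance φ (Measure.pi fun _ : Fin n => ν) / n :=
  variance_hajek_projection_le_general hn ν φ hL2 hsym
end

section
/- Let X₁,…,X_n be i.i.d. with distribution F on a measurable space, let F̂ₙ denote the empirical distribution, and let h : Ξ^k → ℝ be bounded and measurable with the zero-marginal-mean property: ∫ h(x₁,…,x_k) dF(x_t) = 0 for every coordinate t and all values of the other coordinates. Then E[(∫ h d(F̂ₙ)^{⊗k})²] ≤ C·‖h‖_∞²·n^{−k}, where C depends only on k. -/
/-!
Expanding the square writes the second moment as `n⁻²ᵏ` times a sum, over index maps
`J : Fin k ⊕ Fin k → Fin n`, of `E[h(X ∘ J ∘ inl) · h(X ∘ J ∘ inr)]`. If some data point occurs in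
exactly one of the `2k` slots, integrating it out first kills the term by the zero-marginal
property. In the remaining terms every index occurs at least twice, so `J` takes at most `k`
values and factors through `Fin k`; there are at most `nᵏ k²ᵏ` such `J`, each term being at
most `M²`.
-/

open MeasureTheory Finset

theorem integral_pi_eq_integral_integral_update {n : ℕ} {α : Fin (n + 1) → Type*}
    [∀ i, MeasurableSpace (α i)] (μ : ∀ i, Measure (α i)) [∀ i, IsProbabilityMeasure (μ i)]
    (i : Fin (n + 1)) {f : (∀ j, α j) → ℝ} (hf : Integrable f (Measure.pi μ)) :
    ∫ x, f x ∂Measure.pi μ = ∫ x, ∫ y, f (Function.update x i y) ∂μ i ∂Measure.pi μ := by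
  set e := MeasurableEquiv.piFinSuccAbove α i
  have he : MeasurePreserving e _ _ := measurePreserving_piFinSuccAbove μ i
  set g : (∀ j, α (i.succAbove j)) → ℝ := fun x' => ∫ y, f (i.insertNth y x') ∂μ i
  calc ∫ x, f x ∂Measure.pi μ
      = ∫ p, f (e.symm p) ∂(μ i).prod (Measure.pi fun j => μ (i.succAbove j)) := by
        rw [← he.integral_comp']; simp
    _ = ∫ x', g x' ∂Measure.pi fun j => μ (i.succAbove j) :=
        integral_prod_symm _ ((he.symm _).integrable_comp_emb e.symm.measurableEmbedding |>.mpr hf)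
    _ = ∫ p, g p.2 ∂(μ i).prod (Measure.pi fun j => μ (i.succAbove j)) := by
        simp [integral_fun_snd]
    _ = ∫ x, ∫ y, f (Function.update x i y) ∂μ i ∂Measure.pi μ := by
        rw [← he.integral_comp']
        simp [e, g]

theorem abs_mul_le_sq_of_abs_le {a b M : ℝ} (ha : |a| ≤ M) (hb : |b| ≤ M) :
    |a * b| ≤ M ^ 2 := by
  rw [abs_mul, sq]
  exact mul_le_mul ha hb (abs_nonneg b) ((abs_nonneg a).trans ha)

section ProductMoment

variable {α : Type*} [MeasurableSpace α] {k : ℕ} {h : (Fin k → α) → ℝ} {M : ℝ}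

theorem integrable_comp_mul_comp {ι : Type*} {μ : Measure (ι → α)} [IsFiniteMeasure μ]
    (hm : Measurable h) (hb : ∀ x, |h x| ≤ M) (j j' : Fin k → ι) :
    Integrable (fun x => h (fun s => x (j s)) * h (fun s => x (j' s))) μ := by
  refine .of_bound (by fun_prop) (M ^ 2) (.of_forall fun x => ?_)
  exact abs_mul_le_sq_of_abs_le (hb _) (hb _)

theorem integral_comp_mul_comp_eq_zero {ν : Measure α} [IsProbabilityMeasure ν] {l n : ℕ}
    {g : (Fin l → α) → ℝ} {j : Fin k → Fin (n + 1)} {j' : Fin l → Fin (n + 1)} {t : Fin k}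
    (hz : ∀ x, ∫ y, h (Function.update x t y) ∂ν = 0)
    (hj : ∀ s, j s = j t → s = t) (hj' : ∀ s, j' s ≠ j t)
    (hint : Integrable (fun x => h (fun s => x (j s)) * g (fun s => x (j' s)))
      (Measure.pi fun _ => ν)) :
    ∫ x, h (fun s => x (j s)) * g (fun s => x (j' s)) ∂(Measure.pi fun _ => ν) = 0 := by
  have hupd : ∀ (x : Fin (n + 1) → α) y,
      (fun s => Function.update x (j t) y (j s)) = Function.update (fun s => x (j s)) t y := by
    intro x y
    funext s
    by_cases hs : s = t
    · subst hs; simp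
    · rw [Function.update_of_ne (mt (hj s) hs), Function.update_of_ne hs]
  rw [integral_pi_eq_integral_integral_update _ (j t) hint]
  refine integral_eq_zero_of_ae (.of_forall fun x => ?_)
  simp only [hupd, Function.update_of_ne (hj' _), integral_mul_const, hz, zero_mul, Pi.zero_apply]

theorem integral_comp_mul_comp_le {ν : Measure α} [IsProbabilityMeasure ν] {n : ℕ}
    (hm : Measurable h) (hb : ∀ x, |h x| ≤ M)
    (hz : ∀ (t : Fin k) (x : Fin k → α), ∫ y, h (Function.update x t y) ∂ν = 0)
    (J : Fin k ⊕ Fin k → Fin n) :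
    ∫ x, h (fun t => x (J (.inl t))) * h (fun t => x (J (.inr t))) ∂(Measure.pi fun _ => ν)
      ≤ (if ∀ s, ∃ s', s' ≠ s ∧ J s' = J s then 1 else 0) * M ^ 2 := by
  split_ifs with hcover
  · calc _ ≤ ∫ _, M ^ 2 ∂(Measure.pi fun _ => ν) :=
          integral_mono (integrable_comp_mul_comp hm hb _ _) (integrable_const _) fun x =>
            (le_abs_self _).trans (abs_mul_le_sq_of_abs_le (hb _) (hb _))
      _ = 1 * M ^ 2 := by simp
  · push Not at hcover
    obtain ⟨s, hs⟩ := hcover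
    cases n with
    | zero => exact (J s).elim0
    | succ n =>
      rw [zero_mul]
      refine le_of_eq ?_
      rcases s with t | t
      · exact integral_comp_mul_comp_eq_zero (hz t) (fun u hu => Sum.inl_injective
          (by_contra fun hne => hs _ hne hu)) (fun u => hs _ Sum.inr_ne_inl)
          (integrable_comp_mul_comp hm hb _ _)
      · simpa only [mul_comm] using integral_comp_mul_comp_eq_zero (hz t)
          (fun u hu => Sum.inr_injective (by_contra fun hne => hs _ hne hu))
          (fun u => hs _ Sum.inl_ne_inr) (integrable_comp_mul_comp hm hb _ _)

end ProductMoment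

theorem two_mul_card_image_le_card {α β : Type*} [Fintype α] [DecidableEq β] {J : α → β}
    (hJ : ∀ a, ∃ a', a' ≠ a ∧ J a' = J a) : 2 * #(univ.image J) ≤ Fintype.card α := by
  classical
  refine mul_card_image_le_card_of_maps_to (fun a _ => mem_image_of_mem J (mem_univ a)) 2 ?_
  intro b hb
  obtain ⟨a, -, rfl⟩ := mem_image.1 hb
  obtain ⟨a', hne, heq⟩ := hJ a
  calc 2 = #{a', a} := (card_pair hne).symm
    _ ≤ #{x ∈ univ | J x = J a} := card_le_card (by simp [insert_subset_iff, heq])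

theorem card_filter_card_image_le {α β γ : Type*} [Fintype α] [DecidableEq α] [Fintype β]
    [Nonempty β] [DecidableEq β] [Fintype γ] :
    #{J : α → β | #(univ.image J) ≤ Fintype.card γ}
      ≤ Fintype.card β ^ Fintype.card γ * Fintype.card γ ^ Fintype.card α := by
  classical
  have hfactor : ∀ J : α → β, #(univ.image J) ≤ Fintype.card γ →
      ∃ p : (γ → β) × (α → γ), (fun a => p.1 (p.2 a)) = J := by
    intro J hJ
    obtain ⟨ι⟩ : Nonempty (univ.image J ↪ γ) :=
      Function.Embedding.nonempty_of_card_le (by rwa [Fintype.card_coe])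
    refine ⟨(Function.extend ι Subtype.val fun _ => Classical.arbitrary β,
      fun a => ι ⟨J a, mem_image_of_mem J (mem_univ a)⟩), funext fun a => ?_⟩
    dsimp only
    rw [ι.injective.extend_apply]
  calc #{J : α → β | #(univ.image J) ≤ Fintype.card γ}
      ≤ #(univ.image fun p : (γ → β) × (α → γ) => fun a => p.1 (p.2 a)) := by
        refine card_le_card fun J hJ => ?_
        obtain ⟨p, hp⟩ := hfactor J (mem_filter.1 hJ).2
        exact mem_image.2 ⟨p, mem_univ p, hp⟩
    _ ≤ Fintype.card ((γ → β) × (α → γ)) := card_image_le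
    _ = Fintype.card β ^ Fintype.card γ * Fintype.card γ ^ Fintype.card α := by simp

theorem card_filter_forall_exists_ne_eq_le (k n : ℕ) [NeZero n] :
    #{J : Fin k ⊕ Fin k → Fin n | ∀ s, ∃ s', s' ≠ s ∧ J s' = J s} ≤ n ^ k * k ^ (k + k) := by
  calc #{J : Fin k ⊕ Fin k → Fin n | ∀ s, ∃ s', s' ≠ s ∧ J s' = J s}
      ≤ #{J : Fin k ⊕ Fin k → Fin n | #(univ.image J) ≤ Fintype.card (Fin k)} :=
        card_le_card <| monotone_filter_right _ fun J _ hJ => by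
          have := two_mul_card_image_le_card hJ
          simp only [Fintype.card_sum, Fintype.card_fin] at this ⊢
          omega
    _ ≤ n ^ k * k ^ (k + k) := by
        simpa using card_filter_card_image_le (α := Fin k ⊕ Fin k) (β := Fin n) (γ := Fin k)

theorem sq_sum_eq_sum_comp_inl_mul_comp_inr {ι β R : Type*} [Fintype ι] [DecidableEq ι]
    [Fintype β] [CommSemiring R] (f : (ι → β) → R) :
    (∑ j, f j) ^ 2 = ∑ J : ι ⊕ ι → β, f (fun t => J (.inl t)) * f (fun t => J (.inr t)) := by
  rw [sq, sum_mul_sum, ← Fintype.sum_prod_type']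
  exact (Fintype.sum_equiv (Equiv.sumArrowEquivProdArrow ι ι β) _ _ fun _ => rfl).symm

theorem degenerate_empirical_integral_second_moment_general
    {α : Type*} [MeasurableSpace α] (k : ℕ) :
    ∃ C : ℝ, 0 < C ∧
      ∀ (ν : Measure α), IsProbabilityMeasure ν →
      ∀ (h : (Fin k → α) → ℝ) (M : ℝ), Measurable h → (∀ x, |h x| ≤ M) →
      (∀ (t : Fin k) (x : Fin k → α), ∫ y, h (Function.update x t y) ∂ν = 0) →
      ∀ n : ℕ, 0 < n →
        ∫ ω : Fin n → α,
            ((1 / (n : ℝ) ^ k) * ∑ j : Fin k → Fin n, h (fun t => ω (j t))) ^ 2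
            ∂(Measure.pi fun _ : Fin n => ν)
          ≤ C * M ^ 2 / (n : ℝ) ^ k := by
  refine ⟨((k ^ (k + k) : ℕ) : ℝ), Nat.cast_pos.2 ?_, ?_⟩
  · rw [pow_add]; exact Nat.mul_pos Nat.pow_self_pos Nat.pow_self_pos
  intro ν _ h M hm hb hz n hn
  have : NeZero n := ⟨hn.ne'⟩
  calc _ = (1 / (n : ℝ) ^ k) ^ 2 * ∑ J : Fin k ⊕ Fin k → Fin n, ∫ ω,
          h (fun t => ω (J (.inl t))) * h (fun t => ω (J (.inr t)))
          ∂(Measure.pi fun _ : Fin n => ν) := by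
        simp_rw [mul_pow, sq_sum_eq_sum_comp_inl_mul_comp_inr]
        rw [integral_const_mul,
          integral_finsetSum _ fun J _ => integrable_comp_mul_comp hm hb _ _]
    _ ≤ (1 / (n : ℝ) ^ k) ^ 2 * ∑ J : Fin k ⊕ Fin k → Fin n,
          (if ∀ s, ∃ s', s' ≠ s ∧ J s' = J s then 1 else 0) * M ^ 2 := by
        gcongr with J
        exact integral_comp_mul_comp_le hm hb hz J
    _ ≤ (1 / (n : ℝ) ^ k) ^ 2 * (((n ^ k * k ^ (k + k) : ℕ) : ℝ) * M ^ 2) := by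
        rw [← sum_mul, sum_boole]
        gcongr
        exact_mod_cast card_filter_forall_exists_ne_eq_le k n
    _ = ((k ^ (k + k) : ℕ) : ℝ) * M ^ 2 / (n : ℝ) ^ k := by
        field_simp
        push_cast
        ring

/-- Second moment of a completely degenerate multilinear empirical integral:
there is a constant `C` depending only on `k` such that for any probability
measure `ν`, any bounded measurable `h : Ξᵏ → ℝ` with zero marginal means
(`∫ h(x₁,…,x_k) dν(x_t) = 0` in each coordinate `t`), and i.i.d. data
`X₁,…,Xₙ ∼ ν`, one has
`E[(∫ h d(F̂ₙ)^{⊗k})²] = E[((1/nᵏ) Σ_{j₁,…,j_k} h(X_{j₁},…,X_{j_k}))²]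
  ≤ C·‖h‖∞²·n^{−k}`. -/
theorem degenerate_empirical_integral_second_moment
    {α : Type*} [MeasurableSpace α] (k : ℕ) (hk : 0 < k) :
    ∃ C : ℝ, 0 < C ∧
      ∀ (ν : Measure α), IsProbabilityMeasure ν →
      ∀ (h : (Fin k → α) → ℝ) (M : ℝ), Measurable h → (∀ x, |h x| ≤ M) →
      (∀ (t : Fin k) (x : Fin k → α), ∫ y, h (Function.update x t y) ∂ν = 0) →
      ∀ n : ℕ, 0 < n →
        ∫ ω : Fin n → α,
            ((1 / (n : ℝ) ^ k) * ∑ j : Fin k → Fin n, h (fun t => ω (j t))) ^ 2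
            ∂(Measure.pi fun _ : Fin n => ν)
          ≤ C * M ^ 2 / (n : ℝ) ^ k :=
  degenerate_empirical_integral_second_moment_general k
end
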